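/- A connected graph G is multiply connected (i.e., G minus any single edge remains connected, equivalently G has no bridges) if and only if its Laplacian is spread, i.e., no difference e_i − e_j (i ≠ j) of standard basis vectors lies in the ℤ-column span of the Laplacian. -/

import Mathlib

/-- Laplacian of a multigraph given by edge multiplicities on unordered pairs. -/
def lap {V : Type} [Fintype V] [DecidableEq V] (cE : Sym2 V → ℕ) : Matrix V V ℤ :=
  fun x y => if x = y then (∑ k : V, (cE s(x, k) : ℤ)) else -(cE s(x, y) : ℤ)

/-- Underlying simple graph of a multigraph. -/
def mgraph {V : Type} (cE : Sym2 V → ℕ) : SimpleGraph V where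
  Adj a b := a ≠ b ∧ 0 < cE s(a, b)
  symm := ⟨fun a b h => ⟨h.1.symm, by rw [Sym2.eq_swap]; exact h.2⟩⟩
  loopless := ⟨fun a h => h.1 rfl⟩

lemma reach_closed {V : Type} (G : SimpleGraph V) (S : Set V)
    (hS : ∀ p q, G.Adj p q → p ∈ S → q ∈ S) {u v : V}
    (h : G.Reachable u v) (hu : u ∈ S) : v ∈ S := by
  obtain ⟨w⟩ := h
  induction w with
  | nil => exact hu
  | cons ha _ ih => exact ih (hS _ _ ha hu)

lemma lap_mulVec {n : ℕ} (cE : Sym2 (Fin n) → ℕ) (hloop : ∀ x : Fin n, cE s(x, x) = 0)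
    (x : Fin n → ℤ) (v : Fin n) :
    (lap cE).mulVec x v = ∑ k : Fin n, (cE s(v, k) : ℤ) * (x v - x k) := by
  have hvv : (cE s(v,v) : ℤ) = 0 := by exact_mod_cast congrArg (Nat.cast : ℕ → ℤ) (hloop v)
  simp only [Matrix.mulVec, dotProduct, lap]
  have h1 : ∀ k : Fin n, (if v = k then (∑ j : Fin n, (cE s(v,j) : ℤ)) else -(cE s(v,k) : ℤ)) * x k
      = (if k = v then ((∑ j : Fin n, (cE s(v,j) : ℤ)) + (cE s(v,k):ℤ)) * x k else 0) - (cE s(v,k):ℤ) * x k := by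
    intro k
    by_cases h : v = k
    · subst h; simp [hvv]
    · simp [h, Ne.symm h]
  rw [Finset.sum_congr rfl fun k _ => h1 k, Finset.sum_sub_distrib, Finset.sum_ite_eq' Finset.univ v]
  simp only [Finset.mem_univ, if_true, hvv, add_zero]
  rw [Finset.sum_congr rfl (fun k _ => mul_sub (cE s(v,k):ℤ) (x v) (x k)), Finset.sum_sub_distrib,
    ← Finset.sum_mul]

lemma cut_sum {n : ℕ} (cE : Sym2 (Fin n) → ℕ) (hloop : ∀ x : Fin n, cE s(x, x) = 0)
    (x : Fin n → ℤ) (S : Finset (Fin n)) :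
    ∑ v ∈ S, (lap cE).mulVec x v = ∑ v ∈ S, ∑ k ∈ Sᶜ, (cE s(v,k) : ℤ) * (x v - x k) := by
  have hsplit : ∀ v : Fin n, (lap cE).mulVec x v =
      (∑ k ∈ S, (cE s(v,k) : ℤ) * (x v - x k)) + ∑ k ∈ Sᶜ, (cE s(v,k) : ℤ) * (x v - x k) := by
    intro v
    rw [lap_mulVec cE hloop, ← Finset.sum_add_sum_compl S]
  rw [Finset.sum_congr rfl fun v _ => hsplit v, Finset.sum_add_distrib]
  have hzero : ∑ v ∈ S, ∑ k ∈ S, (cE s(v,k) : ℤ) * (x v - x k) = 0 := by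
    have h2 : ∑ v ∈ S, ∑ k ∈ S, (cE s(v,k) : ℤ) * (x v - x k)
        = - ∑ v ∈ S, ∑ k ∈ S, (cE s(v,k) : ℤ) * (x v - x k) := by
      nth_rewrite 2 [Finset.sum_comm]
      rw [← Finset.sum_neg_distrib]
      refine Finset.sum_congr rfl fun v _ => ?_
      rw [← Finset.sum_neg_distrib]
      refine Finset.sum_congr rfl fun k _ => ?_
      rw [Sym2.eq_swap]; ring
    linarith
  rw [hzero, zero_add]

lemma mgraph_adj {V : Type} (cE : Sym2 V → ℕ) (p q : V) :
    (mgraph cE).Adj p q ↔ p ≠ q ∧ 0 < cE s(p, q) := Iff.rfl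

lemma exists_cross {n : ℕ} (G : SimpleGraph (Fin n)) (hG : G.Preconnected)
    (S : Finset (Fin n)) {u w : Fin n} (hu : u ∈ S) (hw : w ∉ S) :
    ∃ p ∈ S, ∃ q, q ∉ S ∧ G.Adj p q := by
  by_contra h
  push_neg at h
  exact hw (reach_closed G (↑S) (fun p q hpq hp => by
    by_contra hq
    exact h p hp q (by simpa using hq) hpq) (hG u w) hu)


/-- a connected multigraph is multiply connected (removing any single edge
leaves it connected, i.e. it has no bridges) iff its Laplacian is spread (no `e_i − e_j`
with `i ≠ j` lies in the integer column span of the Laplacian). -/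
theorem multiply_connected_iff_spread {n : ℕ} (cE : Sym2 (Fin n) → ℕ)
    (hloop : ∀ x : Fin n, cE s(x, x) = 0)
    (hconn : (mgraph cE).Connected) :
    (∀ a b : Fin n, a ≠ b → 0 < cE s(a, b) →
        (mgraph (fun e0 => if e0 = s(a, b) then cE e0 - 1 else cE e0)).Connected) ↔
      (∀ i j : Fin n, i ≠ j →
        ¬ ∃ x : Fin n → ℤ, (lap cE).mulVec x = Pi.single i 1 - Pi.single j 1) := by
  classical
  constructor
  · -- multiply connected → spread
    rintro hmc i j hij ⟨x, hx⟩
    have hne0 : (Finset.univ : Finset (Fin n)).Nonempty := ⟨i, Finset.mem_univ i⟩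
    obtain ⟨v0, -, hv0⟩ := Finset.exists_max_image Finset.univ x hne0
    set S : Finset (Fin n) := Finset.univ.filter (fun v => x v = x v0) with hS
    have hmemS : ∀ v, v ∈ S ↔ x v = x v0 := fun v => by simp [hS]
    have hltM : ∀ k, k ∉ S → x k < x v0 := fun k hk =>
      lt_of_le_of_ne (hv0 k (Finset.mem_univ k)) (fun h => hk ((hmemS k).mpr h))
    have hv0S : v0 ∈ S := (hmemS v0).mpr rfl
    have hsingle : ∀ v, (Pi.single i 1 - Pi.single j 1 : Fin n → ℤ) v =
        (if v = i then 1 else 0) - (if v = j then 1 else 0) := by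
      intro v; simp [Pi.single_apply]
    -- S is a proper subset
    have hproper : ∃ w, w ∉ S := by
      by_contra hall
      push_neg at hall
      have h0 : (lap cE).mulVec x i = 0 := by
        rw [lap_mulVec cE hloop]
        refine Finset.sum_eq_zero fun k _ => ?_
        rw [(hmemS i).mp (hall i), (hmemS k).mp (hall k)]; ring
      rw [hx, hsingle] at h0
      simp [hij] at h0
    obtain ⟨w, hw⟩ := hproper
    obtain ⟨aa, haS, bb, hbS, hadj⟩ := exists_cross (mgraph cE) hconn.preconnected S hv0S hw
    obtain ⟨hne', hpos'⟩ := (mgraph_adj cE aa bb).mp hadj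
    set P : Finset (Fin n × Fin n) := S ×ˢ Sᶜ with hP
    set F : Fin n × Fin n → ℤ := fun p => (cE s(p.1, p.2) : ℤ) * (x p.1 - x p.2) with hF
    have hTP : ∑ p ∈ P, F p = ∑ v ∈ S, (lap cE).mulVec x v := by
      rw [cut_sum cE hloop, hP, Finset.sum_product S Sᶜ F]
    have hT1 : ∑ p ∈ P, F p ≤ 1 := by
      rw [hTP, hx, Finset.sum_congr rfl fun v _ => hsingle v, Finset.sum_sub_distrib,
        Finset.sum_ite_eq' S i (fun _ => (1:ℤ)), Finset.sum_ite_eq' S j (fun _ => (1:ℤ))]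
      split_ifs <;> norm_num
    have hF0 : ∀ p ∈ P, 0 ≤ F p := by
      intro p hp
      rw [hP, Finset.mem_product] at hp
      have h1 : x p.1 = x v0 := (hmemS p.1).mp hp.1
      have h2 : x p.2 < x v0 := hltM p.2 (by simpa using hp.2)
      exact mul_nonneg (Int.natCast_nonneg _) (by linarith)
    have habP : (aa, bb) ∈ P := Finset.mem_product.mpr ⟨haS, Finset.mem_compl.mpr hbS⟩
    have hd1 : 1 ≤ x aa - x bb := by
      have h1 := (hmemS aa).mp haS
      have h2 := hltM bb hbS
      linarith
    have hc1 : (1:ℤ) ≤ (cE s(aa, bb) : ℤ) := by exact_mod_cast hpos'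
    have hFab : 1 ≤ F (aa, bb) := by
      have : F (aa, bb) = (cE s(aa, bb) : ℤ) * (x aa - x bb) := rfl
      rw [this]; nlinarith
    have hsplit := Finset.add_sum_erase P F habP
    have hrest_nonneg : 0 ≤ ∑ p ∈ P.erase (aa, bb), F p :=
      Finset.sum_nonneg fun p hp => hF0 p (Finset.mem_of_mem_erase hp)
    have hrest0 : ∑ p ∈ P.erase (aa, bb), F p = 0 := by linarith
    have hzero : ∀ p ∈ P.erase (aa, bb), F p = 0 :=
      (Finset.sum_eq_zero_iff_of_nonneg fun p hp => hF0 p (Finset.mem_of_mem_erase hp)).mp hrest0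
    have hFab1 : F (aa, bb) = 1 := by linarith
    have hcle : (cE s(aa, bb) : ℤ) = 1 := by
      have hFr : (cE s(aa, bb) : ℤ) * (x aa - x bb) = 1 := hFab1
      nlinarith
    have hcE1 : cE s(aa, bb) = 1 := by exact_mod_cast hcle
    have hconn' := hmc aa bb hne' hpos'
    refine hbS (reach_closed
      (mgraph fun e0 => if e0 = s(aa, bb) then cE e0 - 1 else cE e0) (↑S)
      ?_ (hconn'.preconnected aa bb) haS)
    intro p q hpq hpS
    rw [mgraph_adj] at hpq
    have hpS' : p ∈ S := hpS
    by_contra hqS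
    have hqS' : q ∉ S := fun h => hqS h
    by_cases he : s(p, q) = s(aa, bb)
    · exact absurd hpq.2 (by simp [he, hcE1])
    · have hpos2 : 0 < cE s(p, q) := by simpa [he] using hpq.2
      have hPmem : (p, q) ∈ P.erase (aa, bb) := by
        refine Finset.mem_erase.mpr ⟨?_,
          Finset.mem_product.mpr ⟨hpS', Finset.mem_compl.mpr hqS'⟩⟩
        intro hEq
        exact he (congrArg (fun r : Fin n × Fin n => s(r.1, r.2)) hEq)
      have hzz := hzero _ hPmem
      have hzz' : (cE s(p, q) : ℤ) * (x p - x q) = 0 := hzz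
      have hxp : x p = x v0 := (hmemS p).mp hpS'
      have hxq : x q < x v0 := hltM q hqS'
      have hcp : (1:ℤ) ≤ (cE s(p, q) : ℤ) := by exact_mod_cast hpos2
      nlinarith
  · -- spread → multiply connected
    intro hsp a b hne hpos
    by_contra hnc
    set cE' : Sym2 (Fin n) → ℕ := fun e0 => if e0 = s(a, b) then cE e0 - 1 else cE e0 with hcE'
    -- the multiplicity of the removed edge must be 1
    have hcE1 : cE s(a, b) = 1 := by
      by_contra h1
      have h2 : 2 ≤ cE s(a, b) := by omega
      refine hnc (hconn.mono ?_)
      intro p q hpq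
      rw [mgraph_adj] at hpq ⊢
      refine ⟨hpq.1, ?_⟩
      by_cases he : s(p, q) = s(a, b)
      · simp only [cE', he, if_pos rfl]; omega
      · simpa [cE', he] using hpq.2
    have haA : (mgraph cE').Reachable a a := SimpleGraph.Reachable.refl a
    -- b is not reachable from a in the reduced graph
    have hbA : ¬ (mgraph cE').Reachable a b := by
      intro hr
      haveI : Nonempty (Fin n) := ⟨a⟩
      apply hnc
      have key : ∀ u, (mgraph cE').Reachable a u := by
        intro u
        refine reach_closed (mgraph cE) {v | (mgraph cE').Reachable a v} ?_
          (hconn.preconnected a u) haA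
        intro p q hpq hp
        by_cases he : s(p, q) = s(a, b)
        · rcases Sym2.eq_iff.mp he with ⟨rfl, rfl⟩ | ⟨rfl, rfl⟩
          · exact hr
          · exact haA
        · refine hp.trans (SimpleGraph.Adj.reachable ?_)
          rw [mgraph_adj] at hpq ⊢
          refine ⟨hpq.1, ?_⟩
          simpa [cE', he] using hpq.2
      exact ⟨fun u v => (key u).symm.trans (key v)⟩
    -- the only positive-multiplicity edge leaving the reachability class of a is (a,b)
    have hkey : ∀ p q : Fin n, (mgraph cE').Reachable a p → ¬ (mgraph cE').Reachable a q →
        0 < cE s(p, q) → p = a ∧ q = b := by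
      intro p q hp hq hposq
      by_cases he : s(p, q) = s(a, b)
      · rcases Sym2.eq_iff.mp he with ⟨rfl, rfl⟩ | ⟨rfl, rfl⟩
        · exact ⟨rfl, rfl⟩
        · exact absurd haA hq
      · exfalso
        refine hq (hp.trans (SimpleGraph.Adj.reachable ?_))
        rw [mgraph_adj]
        refine ⟨fun hpq => hq (hpq ▸ hp), ?_⟩
        simpa [cE', he] using hposq
    set x : Fin n → ℤ := fun v => if (mgraph cE').Reachable a v then 1 else 0 with hxdef
    have hterm : ∀ v k : Fin n, (cE s(v, k) : ℤ) * (x v - x k) =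
        (if v = a ∧ k = b then 1 else if v = b ∧ k = a then -1 else 0) := by
      intro v k
      by_cases hv : (mgraph cE').Reachable a v <;>
        by_cases hk : (mgraph cE').Reachable a k
      · rw [if_neg (fun h : v = a ∧ k = b => hbA (h.2 ▸ hk)),
          if_neg (fun h : v = b ∧ k = a => hbA (h.1 ▸ hv))]
        simp [hxdef, hv, hk]
      · by_cases hc : 0 < cE s(v, k)
        · obtain ⟨rfl, rfl⟩ := hkey v k hv hk hc
          rw [if_pos ⟨rfl, rfl⟩]
          simp [hxdef, hv, hk, hcE1]
        · have hc0 : cE s(v, k) = 0 := by omega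
          rw [if_neg (fun h : v = a ∧ k = b => by rw [h.1, h.2] at hc0; omega),
            if_neg (fun h : v = b ∧ k = a => hbA (h.1 ▸ hv))]
          simp [hc0]
      · by_cases hc : 0 < cE s(v, k)
        · have hc' : 0 < cE s(k, v) := by rwa [Sym2.eq_swap]
          obtain ⟨rfl, rfl⟩ := hkey k v hk hv hc'
          rw [if_neg (fun h : v = k ∧ k = v => hbA (h.2 ▸ hk)), if_pos ⟨rfl, rfl⟩]
          have h1 : cE s(v, k) = 1 := by rw [Sym2.eq_swap]; exact hcE1
          simp [hxdef, hv, hk, h1]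
        · have hc0 : cE s(v, k) = 0 := by omega
          rw [if_neg (fun h : v = a ∧ k = b => hbA (h.2 ▸ hk)),
            if_neg (fun h : v = b ∧ k = a => by
              rw [h.1, h.2] at hc0; rw [Sym2.eq_swap] at hc0; omega)]
          simp [hc0]
      · rw [if_neg (fun h : v = a ∧ k = b => hv (h.1 ▸ haA)),
          if_neg (fun h : v = b ∧ k = a => hk (h.2 ▸ haA))]
        simp [hxdef, hv, hk]
    refine hsp a b hne ⟨x, funext fun v => ?_⟩
    rw [lap_mulVec cE hloop, Finset.sum_congr rfl fun k _ => hterm v k]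
    by_cases hva : v = a
    · subst hva
      simp [Pi.single_apply, hne, Ne.symm hne, Finset.sum_ite_eq']
    · by_cases hvb : v = b
      · subst hvb
        simp [Pi.single_apply, hne, Ne.symm hne, Finset.sum_ite_eq']
      · simp [Pi.single_apply, hva, hvb]
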